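/- arXiv:1803.04889 — 2 statements merged into one kernel-verified Lean document; each statement's English description precedes it below -/
import Mathlib

section
/- Let T be a finite simple graph with an edge coloring c, and suppose T contains no rainbow matching of size 6. Let G be a spanning subgraph of T such that c restricted to the edges of G is injective and every color appearing on some edge of T also appears on some edge of G. If G contains two edge-disjoint matchings M' and M'' each of size 5, then no edge of T has both of its endpoints outside the set of vertices covered by the edges of M' ∪ M''. -/
/-- `M` is a matching in the simple graph `G`: a set of edges of `G` that are
pairwise disjoint (no two distinct edges share a vertex). -/
def IsMatchingSet {V : Type*} (G : SimpleGraph V) (M : Finset (Sym2 V)) : Prop :=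
  (∀ e ∈ M, e ∈ G.edgeSet) ∧
  (∀ e ∈ M, ∀ f ∈ M, e ≠ f → ∀ v : V, v ∈ e → v ∉ f)

lemma rainbow_extend {V : Type*} [DecidableEq V] (T G : SimpleGraph V) (c : Sym2 V → ℕ)
    (hGT : G ≤ T) (hinj : Set.InjOn c G.edgeSet)
    (N : Finset (Sym2 V)) (hN : IsMatchingSet G N) (hcard : N.card = 5)
    (e : Sym2 V) (he : e ∈ T.edgeSet)
    (hdis : ∀ v ∈ e, ∀ f ∈ N, v ∉ f)
    (hcol : ∀ f ∈ N, c f ≠ c e) :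
    ∃ M : Finset (Sym2 V), IsMatchingSet T M ∧ M.card = 6 ∧ Set.InjOn c ↑M := by
  obtain ⟨hNedge, hNdisj⟩ := hN
  have heN : e ∉ N := by
    intro h
    obtain ⟨a, b⟩ := e
    exact hdis a (Sym2.mem_mk_left a b) _ h (Sym2.mem_mk_left a b)
  refine ⟨insert e N, ⟨?_, ?_⟩, ?_, ?_⟩
  · intro f hf
    rcases Finset.mem_insert.mp hf with rfl | hf
    · exact he
    · exact (SimpleGraph.edgeSet_mono hGT) (hNedge f hf)
  · intro f hf g hg hfg v hvf hvg
    rcases Finset.mem_insert.mp hf with rfl | hf' <;>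
      rcases Finset.mem_insert.mp hg with rfl | hg'
    · exact hfg rfl
    · exact hdis v hvf g hg' hvg
    · exact hdis v hvg f hf' hvf
    · exact hNdisj f hf' g hg' hfg v hvf hvg
  · rw [Finset.card_insert_of_notMem heN, hcard]
  · intro f hf g hg hfg
    simp only [Finset.coe_insert, Set.mem_insert_iff, Finset.mem_coe] at hf hg
    rcases hf with rfl | hf <;> rcases hg with rfl | hg
    · rfl
    · exact absurd hfg.symm (hcol g hg)
    · exact absurd hfg (hcol f hf)
    · exact hinj (hNedge f hf) (hNedge g hg) hfg

theorem stmt_1 {V : Type*} [Fintype V] [DecidableEq V] (T G : SimpleGraph V) (c : Sym2 V → ℕ)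
    (hGT : G ≤ T)
    (hnoRainbow : ¬ ∃ M : Finset (Sym2 V),
      IsMatchingSet T M ∧ M.card = 6 ∧ Set.InjOn c ↑M)
    (hinj : Set.InjOn c G.edgeSet)
    (hcolors : c '' T.edgeSet ⊆ c '' G.edgeSet)
    (M' M'' : Finset (Sym2 V))
    (hM' : IsMatchingSet G M') (hM'' : IsMatchingSet G M'')
    (hcard' : M'.card = 5) (hcard'' : M''.card = 5)
    (hdisj : Disjoint M' M'') :
    ∀ e ∈ T.edgeSet, ∃ v : V, v ∈ e ∧ ∃ f ∈ M' ∪ M'', v ∈ f := by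
  intro e he
  by_contra hcon
  push_neg at hcon
  have hdis : ∀ v ∈ e, ∀ f ∈ M' ∪ M'', v ∉ f := hcon
  by_cases hc1 : ∀ f ∈ M', c f ≠ c e
  · exact hnoRainbow (rainbow_extend T G c hGT hinj M' hM' hcard' e he
      (fun v hv f hf => hdis v hv f (Finset.mem_union_left _ hf)) hc1)
  · push_neg at hc1
    obtain ⟨f₁, hf₁, hcf₁⟩ := hc1
    have hc2 : ∀ f ∈ M'', c f ≠ c e := by
      intro f₂ hf₂ hcf₂
      have : f₁ = f₂ := hinj (hM'.1 f₁ hf₁) (hM''.1 f₂ hf₂) (hcf₁.trans hcf₂.symm)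
      exact (Finset.disjoint_left.mp hdisj hf₁) (this ▸ hf₂)
    exact hnoRainbow (rainbow_extend T G c hGT hinj M'' hM'' hcard'' e he
      (fun v hv f hf => hdis v hv f (Finset.mem_union_right _ hf)) hc2)
end

section
/- Let G be a finite simple graph, let M be a maximum matching of G, and let R be the set of vertices of G not covered by M. Then for every edge uw ∈ M with |N_G(u) ∩ R| ≤ |N_G(w) ∩ R|, either N_G(u) ∩ R = ∅, or |N_G(u) ∩ R| = 1 and N_G(u) ∩ R = N_G(w) ∩ R. -/
lemma key_aux {V : Type*} [Fintype V] (G : SimpleGraph V)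
    (M : Finset (Sym2 V)) (hM : IsMatchingSet G M)
    (hmax : ∀ M' : Finset (Sym2 V), IsMatchingSet G M' → M'.card ≤ M.card)
    {u w x y : V} (huw : s(u, w) ∈ M)
    (hx : x ∈ G.neighborSet u ∩ {v : V | ∀ f ∈ M, v ∉ f})
    (hy : y ∈ G.neighborSet w ∩ {v : V | ∀ f ∈ M, v ∉ f}) : x = y := by
  classical
  by_contra hxy
  obtain ⟨hMe, hMd⟩ := hM
  have hadj : G.Adj u w := (G.mem_edgeSet).1 (hMe _ huw)
  have huw' : u ≠ w := hadj.ne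
  have hux : G.Adj u x := hx.1
  have hwy : G.Adj w y := hy.1
  have hxM : ∀ f ∈ M, x ∉ f := hx.2
  have hyM : ∀ f ∈ M, y ∉ f := hy.2
  have hxuw : x ∉ s(u, w) := hxM _ huw
  have hyuw : y ∉ s(u, w) := hyM _ huw
  have hxu : x ≠ u := fun h => hxuw (by simp [h])
  have hxw : x ≠ w := fun h => hxuw (by simp [h])
  have hyu : y ≠ u := fun h => hyuw (by simp [h])
  have hyw : y ≠ w := fun h => hyuw (by simp [h])
  set M' : Finset (Sym2 V) := insert s(u, x) (insert s(w, y) (M.erase s(u, w))) with hM'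
  have mem_M' : ∀ e, e ∈ M' ↔ e = s(u, x) ∨ e = s(w, y) ∨ (e ∈ M ∧ e ≠ s(u, w)) := by
    intro e
    simp [hM', Finset.mem_insert, Finset.mem_erase, and_comm]
  -- disjointness helper: vertices of old edges vs new edges
  have hnotux : s(u, x) ∉ M := fun h => hxM _ h (by simp)
  have hnotwy : s(w, y) ∉ M := fun h => hyM _ h (by simp)
  have hmatch : IsMatchingSet G M' := by
    constructor
    · intro e he
      rcases (mem_M' e).1 he with h | h | ⟨h, _⟩
      · subst h; exact G.mem_edgeSet.2 hux
      · subst h; exact G.mem_edgeSet.2 hwy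
      · exact hMe _ h
    · intro e he f hf hef v hve
      rcases (mem_M' e).1 he with he1 | he1 | ⟨he1, he2⟩ <;>
        rcases (mem_M' f).1 hf with hf1 | hf1 | ⟨hf1, hf2⟩
      · exact absurd (he1.trans hf1.symm) hef
      · subst he1; subst hf1
        rcases Sym2.mem_iff.1 hve with rfl | rfl
        · simp [Sym2.mem_iff]; exact ⟨huw', hyu.symm⟩
        · simp [Sym2.mem_iff]; exact ⟨hxw, fun h => hxy h⟩
      · subst he1
        rcases Sym2.mem_iff.1 hve with rfl | rfl
        · intro hvf
          exact hMd _ huw _ hf1 (Ne.symm hf2) v (by simp) hvf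
        · exact hxM _ hf1
      · subst he1; subst hf1
        rcases Sym2.mem_iff.1 hve with rfl | rfl
        · simp [Sym2.mem_iff]; exact ⟨huw'.symm, hxw.symm⟩
        · simp [Sym2.mem_iff]; exact ⟨hyu, fun h => hxy h.symm⟩
      · exact absurd (he1.trans hf1.symm) hef
      · subst he1
        rcases Sym2.mem_iff.1 hve with rfl | rfl
        · intro hvf
          exact hMd _ huw _ hf1 (Ne.symm hf2) v (by simp) hvf
        · exact hyM _ hf1
      · subst hf1
        intro hvf
        rcases Sym2.mem_iff.1 hvf with rfl | rfl
        · exact hMd _ he1 _ huw he2 v hve (by simp)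
        · exact hxM _ he1 hve
      · subst hf1
        intro hvf
        rcases Sym2.mem_iff.1 hvf with rfl | rfl
        · exact hMd _ he1 _ huw he2 v hve (by simp)
        · exact hyM _ he1 hve
      · exact hMd _ he1 _ hf1 hef v hve
  have hcard : M'.card = M.card + 1 := by
    have h1 : s(w, y) ∉ M.erase s(u, w) := fun h => hnotwy (Finset.mem_of_mem_erase h)
    have h2 : s(u, x) ∉ insert s(w, y) (M.erase s(u, w)) := by
      simp only [Finset.mem_insert, Finset.mem_erase]
      rintro (h | ⟨_, h⟩)
      · rw [Sym2.eq_iff] at h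
        rcases h with ⟨h, _⟩ | ⟨h, _⟩
        · exact huw' h
        · exact hyu h.symm
      · exact hnotux h
    rw [hM', Finset.card_insert_of_notMem h2, Finset.card_insert_of_notMem h1,
      Finset.card_erase_of_mem huw]
    have : 1 ≤ M.card := Finset.card_pos.2 ⟨_, huw⟩
    omega
  have := hmax M' hmatch
  omega

theorem stmt_5 {V : Type*} [Fintype V] (G : SimpleGraph V)
    (M : Finset (Sym2 V)) (hM : IsMatchingSet G M)
    (hmax : ∀ M' : Finset (Sym2 V), IsMatchingSet G M' → M'.card ≤ M.card)
    (R : Set V) (hR : R = {v : V | ∀ f ∈ M, v ∉ f}) :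
    ∀ u w : V, s(u, w) ∈ M →
      (G.neighborSet u ∩ R).ncard ≤ (G.neighborSet w ∩ R).ncard →
      (G.neighborSet u ∩ R = ∅ ∨
        ((G.neighborSet u ∩ R).ncard = 1 ∧
          G.neighborSet u ∩ R = G.neighborSet w ∩ R)) := by
  classical
  subst hR
  intro u w huw hle
  set R : Set V := {v : V | ∀ f ∈ M, v ∉ f} with hRdef
  by_cases hu : G.neighborSet u ∩ R = ∅
  · exact Or.inl hu
  right
  obtain ⟨x, hx⟩ := Set.nonempty_iff_ne_empty.2 hu
  have hufin : (G.neighborSet u ∩ R).Finite := Set.toFinite _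
  have hwfin : (G.neighborSet w ∩ R).Finite := Set.toFinite _
  have hupos : 1 ≤ (G.neighborSet u ∩ R).ncard :=
    (Set.ncard_pos hufin).2 ⟨x, hx⟩
  have hwpos : 1 ≤ (G.neighborSet w ∩ R).ncard := le_trans hupos hle
  obtain ⟨y, hy⟩ := (Set.ncard_pos hwfin).1 hwpos
  have hxy : x = y := key_aux G M hM hmax huw hx hy
  subst hxy
  have hequ : G.neighborSet u ∩ R = {x} := by
    apply Set.eq_singleton_iff_unique_mem.2 ⟨hx, ?_⟩
    intro x' hx'
    exact key_aux G M hM hmax huw hx' hy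
  have heqw : G.neighborSet w ∩ R = {x} := by
    apply Set.eq_singleton_iff_unique_mem.2 ⟨hy, ?_⟩
    intro y' hy'
    exact (key_aux G M hM hmax huw hx hy').symm
  refine ⟨?_, hequ.trans heqw.symm⟩
  rw [hequ]; exact Set.ncard_singleton x
end
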